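/- For w ∈ [0,1/3], 2(1−w)cos(πw) + (2/(3π))sin(3πw) ≥ 2 − π²w² − 2π²w³, and consequently 2 − |ψ(w)| ≥ π²w² where ψ(w) = (1−w)(e^{−2πiw}+e^{−4πiw}) + (1/(3πi))(1−e^{−6πiw}). -/

import Mathlib

/-!
Factoring out the phase, `ψ(w) = e^{-3πiw} A(w)` with the real amplitude
`A(w) = 2(1 - w) cos(πw) + (2/(3π)) sin(3πw)`, so `‖ψ(w)‖ = |A(w)|`. The lower bound on `A`
comes from `cos x ≥ 1 - x²/2` and `sin x ≥ x - x³/6`; for `w ≤ 1/3` it is far above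
`-(2 - π²w²)`. The upper bound `A(w) ≤ 2 - π²w²` comes from the next Taylor terms,
`cos x ≤ 1 - x²/2 + x⁴/24` and `sin x ≤ x - x³/6 + x⁵/120`, whose contribution is beaten
by the `-2π²w³` term as long as `w ≤ 1/3`.
-/

open Real

/-- The Fourier transform of the localizing function `φ` on `[0,1]`. -/
noncomputable def psi (w : ℝ) : ℂ :=
  (1 - (w : ℂ)) * (Complex.exp (-2 * (π : ℂ) * Complex.I * (w : ℂ)) +
      Complex.exp (-4 * (π : ℂ) * Complex.I * (w : ℂ))) +
    (1 / (3 * (π : ℂ) * Complex.I)) * (1 - Complex.exp (-6 * (π : ℂ) * Complex.I * (w : ℂ)))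

namespace Real

theorem cos_le_one_sub_sq_div_two_add_quartic (x : ℝ) : cos x ≤ 1 - x ^ 2 / 2 + x ^ 4 / 24 := by
  wlog hx : 0 ≤ x
  · simpa [Even.neg_pow (by decide : Even 4)] using this (-x) (by linarith)
  let f (t : ℝ) : ℝ := 1 - t ^ 2 / 2 + t ^ 4 / 24 - cos t
  have hderiv (t : ℝ) : deriv f t = sin t - (t - t ^ 3 / 6) := by
    simp (disch := fun_prop) [f]
    ring
  have hmono : MonotoneOn f (Set.Ici 0) := by
    apply monotoneOn_of_deriv_nonneg (convex_Ici 0) (by fun_prop) (by fun_prop)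
    grind [sin_ge_sub_cube, interior_Ici]
  have := hmono (by simp) hx hx
  grind [cos_zero]

theorem sin_le_sub_cube_add_quintic {x : ℝ} (hx : 0 ≤ x) :
    sin x ≤ x - x ^ 3 / 6 + x ^ 5 / 120 := by
  let f (t : ℝ) : ℝ := t - t ^ 3 / 6 + t ^ 5 / 120 - sin t
  have hderiv (t : ℝ) : deriv f t = 1 - t ^ 2 / 2 + t ^ 4 / 24 - cos t := by
    simp (disch := fun_prop) [f]
    ring
  have hmono : MonotoneOn f (Set.Ici 0) := by
    apply monotoneOn_of_deriv_nonneg (convex_Ici 0) (by fun_prop) (by fun_prop)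
    grind [cos_le_one_sub_sq_div_two_add_quartic]
  have := hmono (by simp) hx hx
  grind [sin_zero]

end Real

noncomputable def psiAmplitude (w : ℝ) : ℝ :=
  2 * (1 - w) * cos (π * w) + (2 / (3 * π)) * sin (3 * π * w)

theorem psi_eq_psiAmplitude_mul_exp (w : ℝ) :
    psi w = psiAmplitude w * Complex.exp (-3 * π * Complex.I * w) := by
  set u := Complex.exp (-π * Complex.I * w) with hu
  have hu0 : u ≠ 0 := Complex.exp_ne_zero _
  have hpow (n : ℕ) : Complex.exp (-n * π * Complex.I * w) = u ^ n := by
    rw [hu, ← Complex.exp_nat_mul]; ring_nf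
  have hcos : (cos (π * w) : ℂ) = (u⁻¹ + u) / 2 := by
    rw [hu, ← Complex.exp_neg, Complex.ofReal_cos, Complex.cos]; push_cast; ring_nf
  have hsin : (sin (3 * π * w) : ℂ) = (u ^ 3 - (u ^ 3)⁻¹) * Complex.I / 2 := by
    rw [← hpow 3, ← Complex.exp_neg, Complex.ofReal_sin, Complex.sin]; push_cast; ring_nf
  have h2 := hpow 2
  have h3 := hpow 3
  have h4 := hpow 4
  have h6 := hpow 6
  push_cast at h2 h3 h4 h6
  rw [psi, psiAmplitude, h2, h3, h4, h6]
  push_cast [hcos, hsin]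
  field_simp
  linear_combination (1 - u ^ 6) * Complex.I_sq

theorem norm_psi (w : ℝ) : ‖psi w‖ = |psiAmplitude w| := by
  simp [psi_eq_psiAmplitude_mul_exp, Complex.norm_exp]

theorem two_sub_le_psiAmplitude {w : ℝ} (hw₀ : 0 ≤ w) (hw₁ : w ≤ 1) :
    2 - π ^ 2 * w ^ 2 - 2 * π ^ 2 * w ^ 3 ≤ psiAmplitude w := by
  have hcos : 1 - (π * w) ^ 2 / 2 ≤ cos (π * w) := one_sub_sq_div_two_le_cos
  have hsin : 3 * π * w - (3 * π * w) ^ 3 / 6 ≤ sin (3 * π * w) := sin_ge_sub_cube (by positivity)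
  calc 2 - π ^ 2 * w ^ 2 - 2 * π ^ 2 * w ^ 3
      = 2 * (1 - w) * (1 - (π * w) ^ 2 / 2) +
          (2 / (3 * π)) * (3 * π * w - (3 * π * w) ^ 3 / 6) := by
        field_simp; ring
    _ ≤ psiAmplitude w := by
        unfold psiAmplitude; gcongr

theorem psiAmplitude_le_two_sub {w : ℝ} (hw₀ : 0 ≤ w) (hw₁ : w ≤ 1 / 3) :
    psiAmplitude w ≤ 2 - π ^ 2 * w ^ 2 := by
  have hcos := cos_le_one_sub_sq_div_two_add_quartic (π * w)
  have hsin := sin_le_sub_cube_add_quintic (x := 3 * π * w) (by positivity)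
  have hπ : π ^ 2 < 9.9225 := by nlinarith [pi_pos, pi_lt_d2]
  have hsmall : π ^ 2 * w / 12 + 19 / 15 * π ^ 2 * w ^ 2 ≤ 2 := by nlinarith
  calc psiAmplitude w
      ≤ 2 * (1 - w) * (1 - (π * w) ^ 2 / 2 + (π * w) ^ 4 / 24) +
          (2 / (3 * π)) * (3 * π * w - (3 * π * w) ^ 3 / 6 + (3 * π * w) ^ 5 / 120) := by
        unfold psiAmplitude; gcongr; linarith
    _ = 2 - π ^ 2 * w ^ 2 - π ^ 2 * w ^ 3 * (2 - π ^ 2 * w / 12 - 19 / 15 * π ^ 2 * w ^ 2) := by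
        field_simp; ring
    _ ≤ 2 - π ^ 2 * w ^ 2 := sub_le_self _ (mul_nonneg (by positivity) (by linarith))

theorem abs_psiAmplitude_le_two_sub {w : ℝ} (hw₀ : 0 ≤ w) (hw₁ : w ≤ 1 / 3) :
    |psiAmplitude w| ≤ 2 - π ^ 2 * w ^ 2 := by
  have hlower := two_sub_le_psiAmplitude hw₀ (by linarith)
  have hπ : π ^ 2 < 9.9225 := by nlinarith [pi_pos, pi_lt_d2]
  have hw : w ^ 2 + w ^ 3 ≤ 4 / 27 := by
    nlinarith [pow_le_pow_left₀ hw₀ hw₁ 2, pow_le_pow_left₀ hw₀ hw₁ 3]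
  have hsmall : π ^ 2 * (w ^ 2 + w ^ 3) ≤ 2 := by
    nlinarith [mul_le_mul hπ.le hw (by positivity) (by norm_num)]
  exact abs_le.2 ⟨by linarith, psiAmplitude_le_two_sub hw₀ hw₁⟩

theorem psi_lower_bound (w : ℝ) (hw : w ∈ Set.Icc (0 : ℝ) (1 / 3)) :
    2 * (1 - w) * Real.cos (π * w) + (2 / (3 * π)) * Real.sin (3 * π * w) ≥
        2 - π ^ 2 * w ^ 2 - 2 * π ^ 2 * w ^ 3 ∧
      2 - ‖psi w‖ ≥ π ^ 2 * w ^ 2 := by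
  obtain ⟨hw₀, hw₁⟩ := hw
  refine ⟨two_sub_le_psiAmplitude hw₀ (by linarith), ?_⟩
  linarith [norm_psi w, abs_psiAmplitude_le_two_sub hw₀ hw₁]
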